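/- (Theorem 2.2) Let A be a bounded self-adjoint operator on a complex Hilbert space H, and let L be an n-dimensional subspace of H with basis of unit vectors e₁,…,eₙ; let M(z) and β be as defined in the context. Let B be a singular (non-invertible) n×n complex matrix, let z ∈ ℂ, and let α_z ∈ ℝ satisfy α_z ≥ ‖M(z) − B‖. If δ > 0 is such that (δ² + 2δ|Im z|)β² > α_z, then Spec(A) ∩ [Re z − |Im z| − δ, Re z + |Im z| + δ] ≠ ∅. -/

import Mathlib

/-!
Take `v ≠ 0` with `B v = 0` and put `u = ∑ v̄ⱼ eⱼ`. The quadratic form of `M(z)` is a Gram form,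
`v* M(z) v = ⟪(A - z̄) u, (A - z) u⟫`, whose real part is `‖(A - Re z) u‖² - (Im z)² ‖u‖²`.
Since `v* M(z) v = v* (M(z) - B) v`, this real part is at most `α_z ‖v‖²`. If the spectrum of `A`
missed the interval, then `(A - Re z)²` would dominate `(|Im z| + δ)²` in the continuous
functional calculus, and together with `‖u‖ ≥ β ‖v‖` the real part would exceed
`(δ² + 2δ|Im z|) β² ‖v‖² > α_z ‖v‖²`.
-/

open scoped ComplexInnerProductSpace Matrix

section Gram

variable {𝕜 E : Type*} [RCLike 𝕜] [NormedAddCommGroup E] [InnerProductSpace 𝕜 E]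

theorem star_dotProduct_mulVec_eq_inner_sum {ι : Type*} [Fintype ι] {G : Matrix ι ι 𝕜}
    {f g : ι → E} (hG : ∀ j k, G j k = inner 𝕜 (f k) (g j)) (v : ι → 𝕜) :
    star v ⬝ᵥ G *ᵥ v = inner 𝕜 (∑ j, star (v j) • f j) (∑ j, star (v j) • g j) := by
  simp only [sum_inner, inner_sum, inner_smul_left, inner_smul_right, dotProduct, Matrix.mulVec,
    Finset.mul_sum, hG, Pi.star_apply, RCLike.star_def, RCLike.conj_conj]
  refine Finset.sum_congr rfl fun j _ => Finset.sum_congr rfl fun k _ => ?_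
  ring

theorem Matrix.norm_star_dotProduct_mulVec_le {ι : Type*} [Fintype ι] [DecidableEq ι]
    (M : Matrix ι ι 𝕜) (v : ι → 𝕜) :
    ‖star v ⬝ᵥ M *ᵥ v‖ ≤ ‖toEuclideanCLM (𝕜 := 𝕜) M‖ * ‖WithLp.toLp 2 v‖ ^ 2 := by
  have h : star v ⬝ᵥ M *ᵥ v =
      inner 𝕜 (WithLp.toLp 2 v) (toEuclideanCLM (𝕜 := 𝕜) M (WithLp.toLp 2 v)) := by
    rw [toEuclideanCLM_toLp, EuclideanSpace.inner_toLp_toLp, dotProduct_comm]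
  calc ‖star v ⬝ᵥ M *ᵥ v‖
      ≤ ‖WithLp.toLp 2 v‖ * ‖toEuclideanCLM (𝕜 := 𝕜) M (WithLp.toLp 2 v)‖ :=
        h ▸ norm_inner_le_norm _ _
    _ ≤ ‖WithLp.toLp 2 v‖ * (‖toEuclideanCLM (𝕜 := 𝕜) M‖ * ‖WithLp.toLp 2 v‖) := by
        gcongr; exact ContinuousLinearMap.le_opNorm _ _
    _ = ‖toEuclideanCLM (𝕜 := 𝕜) M‖ * ‖WithLp.toLp 2 v‖ ^ 2 := by ring

end Gram

section Complex

variable {H : Type*} [NormedAddCommGroup H] [InnerProductSpace ℂ H]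

theorem re_inner_sub_conj_smul_sub_smul (x u : H) (z : ℂ) :
    (⟪x - starRingEnd ℂ z • u, x - z • u⟫).re = ‖x - (z.re : ℂ) • u‖ ^ 2 - z.im ^ 2 * ‖u‖ ^ 2 := by
  have hadd : (x - starRingEnd ℂ z • u) + (x - z • u) = (2 : ℂ) • (x - (z.re : ℂ) • u) := by
    have h := Complex.add_conj z
    push_cast at h
    rw [smul_sub, smul_smul, ← h]
    module
  have hsub : (x - starRingEnd ℂ z • u) - (x - z • u) = ((2 * z.im : ℝ) * Complex.I) • u := by
    rw [← Complex.sub_conj, sub_smul]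
    abel
  rw [← RCLike.re_to_complex, re_inner_eq_norm_add_mul_self_sub_norm_sub_mul_self_div_four, hadd,
    hsub, norm_smul, norm_smul, norm_mul, Complex.norm_I, Complex.norm_real, Real.norm_eq_abs,
    abs_mul, Complex.norm_two]
  nlinarith [sq_abs z.im]

variable [CompleteSpace H]

theorem IsSelfAdjoint.inner_sub_conj_smul_sub_smul {A : H →L[ℂ] H} (hA : IsSelfAdjoint A)
    (x y : H) (z : ℂ) :
    ⟪A x - starRingEnd ℂ z • x, A y - z • y⟫ =
      ⟪A x, A y⟫ - 2 * z * ⟪x, A y⟫ + z ^ 2 * ⟪x, y⟫ := by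
  have hxy : ⟪A x, y⟫ = ⟪x, A y⟫ := hA.isSymmetric x y
  rw [inner_sub_left, inner_sub_right, inner_sub_right, inner_smul_left, inner_smul_right,
    inner_smul_right, inner_smul_left, hxy, Complex.conj_conj]
  ring

theorem IsSelfAdjoint.sq_mul_norm_sq_le_norm_apply_sq {T : H →L[ℂ] H} (hT : IsSelfAdjoint T)
    {m : ℝ} (h : ∀ t ∈ spectrum ℝ T, m ^ 2 ≤ t ^ 2) (u : H) :
    m ^ 2 * ‖u‖ ^ 2 ≤ ‖T u‖ ^ 2 := by
  have hle : algebraMap ℝ (H →L[ℂ] H) (m ^ 2) ≤ T ^ 2 := by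
    rw [← cfc_pow_id (R := ℝ) T 2]
    exact (algebraMap_le_cfc_iff _ _ T).mpr h
  have hTT : ⟪u, T (T u)⟫ = ⟪T u, T u⟫ := (hT.isSymmetric u (T u)).symm
  have hpos := ((ContinuousLinearMap.le_def _ _).mp hle).re_inner_nonneg_right u
  simpa [pow_two, inner_sub_right, Algebra.algebraMap_eq_smul_one, hTT, ← Complex.coe_smul,
    inner_smul_right, inner_self_eq_norm_sq_to_K] using hpos

theorem IsSelfAdjoint.sq_mul_norm_sq_le_norm_sub_smul_sq {A : H →L[ℂ] H} (hA : IsSelfAdjoint A)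
    {c m : ℝ} (h : ∀ t ∈ spectrum ℝ A, m ^ 2 ≤ (t - c) ^ 2) (u : H) :
    m ^ 2 * ‖u‖ ^ 2 ≤ ‖A u - (c : ℂ) • u‖ ^ 2 := by
  have hT : IsSelfAdjoint (A - algebraMap ℝ _ c) := hA.sub (.algebraMap _ (.all c))
  have hTu := hT.sq_mul_norm_sq_le_norm_apply_sq (m := m) ?_ u
  · simpa [Algebra.algebraMap_eq_smul_one, ← Complex.coe_smul] using hTu
  · rw [← spectrum.sub_singleton_eq]
    rintro _ ⟨t, ht, _, rfl, rfl⟩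
    exact h t ht

theorem IsSelfAdjoint.sq_mul_norm_sq_le_norm_sub_smul_sq_of_forall_notMem_spectrum
    {A : H →L[ℂ] H} (hA : IsSelfAdjoint A) {c m : ℝ} (hm : 0 ≤ m)
    (h : ∀ t ∈ Set.Icc (c - m) (c + m), (t : ℂ) ∉ spectrum ℂ A) (u : H) :
    m ^ 2 * ‖u‖ ^ 2 ≤ ‖A u - (c : ℂ) • u‖ ^ 2 := by
  refine hA.sq_mul_norm_sq_le_norm_sub_smul_sq (fun t ht => ?_) u
  have hnot : t ∉ Set.Icc (c - m) (c + m) := fun hmem => h t hmem (spectrum.algebraMap_mem ℂ ht)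
  rw [Set.mem_Icc, not_and_or, not_le, not_le] at hnot
  rcases hnot with hlt | hlt <;> nlinarith

theorem IsSelfAdjoint.star_dotProduct_mulVec_eq_inner {A : H →L[ℂ] H} (hA : IsSelfAdjoint A)
    {ι : Type*} [Fintype ι] {e : ι → H} {A0 A1 A2 : Matrix ι ι ℂ}
    (hA0 : ∀ j k, A0 j k = ⟪A (e k), A (e j)⟫) (hA1 : ∀ j k, A1 j k = ⟪e k, A (e j)⟫)
    (hA2 : ∀ j k, A2 j k = ⟪e k, e j⟫) (z : ℂ) (v : ι → ℂ) :
    let u := ∑ j, star (v j) • e j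
    star v ⬝ᵥ (A0 - (2 * z) • A1 + z ^ 2 • A2) *ᵥ v = ⟪A u - starRingEnd ℂ z • u, A u - z • u⟫ := by
  rw [star_dotProduct_mulVec_eq_inner_sum
    (f := fun k => A (e k) - starRingEnd ℂ z • e k) (g := fun j => A (e j) - z • e j)]
  · simp only [map_sum, map_smul, Finset.smul_sum, smul_sub, Finset.sum_sub_distrib,
      smul_comm _ (star _)]
  · intro j k
    simp only [hA.inner_sub_conj_smul_sub_smul, Matrix.add_apply, Matrix.sub_apply,
      Matrix.smul_apply, hA0, hA1, hA2, smul_eq_mul]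

end Complex

theorem stmt3_general {H : Type*} [NormedAddCommGroup H] [InnerProductSpace ℂ H] [CompleteSpace H]
    (A : H →L[ℂ] H) (hA : IsSelfAdjoint A) (n : ℕ)
    (e : Fin n → H)
    (β : ℝ) (hβ : 0 < β)
    (hβ' : ∀ c : Fin n → ℂ, β * Real.sqrt (∑ j, ‖c j‖ ^ 2) ≤ ‖∑ j, c j • e j‖)
    (A0 A1 A2 : Matrix (Fin n) (Fin n) ℂ)
    (hA0 : ∀ j k, A0 j k = ⟪A (e k), A (e j)⟫)
    (hA1 : ∀ j k, A1 j k = ⟪e k, A (e j)⟫)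
    (hA2 : ∀ j k, A2 j k = ⟪e k, e j⟫)
    (B : Matrix (Fin n) (Fin n) ℂ) (hB : ¬ IsUnit B)
    (z : ℂ) (αz : ℝ)
    (hα : ‖Matrix.toEuclideanCLM (𝕜 := ℂ) (A0 - (2 * z) • A1 + z ^ 2 • A2 - B)‖ ≤ αz)
    (δ : ℝ) (hδ : 0 < δ) (hδ' : αz < (δ ^ 2 + 2 * δ * |z.im|) * β ^ 2) :
    ∃ x ∈ Set.Icc (z.re - |z.im| - δ) (z.re + |z.im| + δ), (x : ℂ) ∈ spectrum ℂ A := by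
  by_contra! hcon
  obtain ⟨v, hv0, hBv⟩ : ∃ v ≠ 0, B *ᵥ v = 0 :=
    Matrix.exists_mulVec_eq_zero_iff.mpr <| by simpa [Matrix.isUnit_iff_isUnit_det] using hB
  set M := A0 - (2 * z) • A1 + z ^ 2 • A2 - B
  set u := ∑ j, star (v j) • e j
  set N := ‖WithLp.toLp 2 v‖
  have hN : 0 < N := norm_pos_iff.mpr (by simpa using hv0)
  have hu : β * N ≤ ‖u‖ := by simpa [N, u, EuclideanSpace.norm_eq] using hβ' (star v)
  have hq : star v ⬝ᵥ M *ᵥ v = ⟪A u - starRingEnd ℂ z • u, A u - z • u⟫ := by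
    rw [Matrix.sub_mulVec, hBv, sub_zero, hA.star_dotProduct_mulVec_eq_inner hA0 hA1 hA2]
  have hgap : (|z.im| + δ) ^ 2 * ‖u‖ ^ 2 ≤ ‖A u - (z.re : ℂ) • u‖ ^ 2 :=
    hA.sq_mul_norm_sq_le_norm_sub_smul_sq_of_forall_notMem_spectrum (by positivity)
      (fun t ht => hcon t (by simpa only [sub_add_eq_sub_sub, ← add_assoc] using ht)) u
  have key : (δ ^ 2 + 2 * δ * |z.im|) * β ^ 2 * N ^ 2 ≤ αz * N ^ 2 :=
    calc (δ ^ 2 + 2 * δ * |z.im|) * β ^ 2 * N ^ 2 ≤ (δ ^ 2 + 2 * δ * |z.im|) * ‖u‖ ^ 2 := by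
          rw [mul_assoc, ← mul_pow]; gcongr
      _ = (|z.im| + δ) ^ 2 * ‖u‖ ^ 2 - z.im ^ 2 * ‖u‖ ^ 2 := by rw [add_sq, sq_abs]; ring
      _ ≤ (⟪A u - starRingEnd ℂ z • u, A u - z • u⟫).re := by
          rw [re_inner_sub_conj_smul_sub_smul]; linarith
      _ ≤ ‖star v ⬝ᵥ M *ᵥ v‖ := hq ▸ Complex.re_le_norm _
      _ ≤ ‖Matrix.toEuclideanCLM (𝕜 := ℂ) M‖ * N ^ 2 := Matrix.norm_star_dotProduct_mulVec_le M v
      _ ≤ αz * N ^ 2 := by gcongr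
  nlinarith [mul_lt_mul_of_pos_right hδ' (pow_pos hN 2)]

/-- Theorem 2.2: if `B` is a singular matrix with `‖M(z) − B‖ ≤ α_z` and
`(δ² + 2δ|Im z|)β² > α_z` for some `δ > 0`, then the spectrum of `A` meets the
interval `[Re z − |Im z| − δ, Re z + |Im z| + δ]`. -/
theorem stmt3 {H : Type*} [NormedAddCommGroup H] [InnerProductSpace ℂ H] [CompleteSpace H]
    (A : H →L[ℂ] H) (hA : IsSelfAdjoint A) (n : ℕ)
    (e : Fin n → H) (he : ∀ j, ‖e j‖ = 1) (hli : LinearIndependent ℂ e)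
    (β : ℝ) (hβ : 0 < β)
    (hβ' : ∀ c : Fin n → ℂ, β * Real.sqrt (∑ j, ‖c j‖ ^ 2) ≤ ‖∑ j, c j • e j‖)
    (A0 A1 A2 : Matrix (Fin n) (Fin n) ℂ)
    (hA0 : ∀ j k, A0 j k = ⟪A (e k), A (e j)⟫)
    (hA1 : ∀ j k, A1 j k = ⟪e k, A (e j)⟫)
    (hA2 : ∀ j k, A2 j k = ⟪e k, e j⟫)
    (B : Matrix (Fin n) (Fin n) ℂ) (hB : ¬ IsUnit B)
    (z : ℂ) (αz : ℝ)
    (hα : ‖Matrix.toEuclideanCLM (𝕜 := ℂ) (A0 - (2 * z) • A1 + z ^ 2 • A2 - B)‖ ≤ αz)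
    (δ : ℝ) (hδ : 0 < δ) (hδ' : αz < (δ ^ 2 + 2 * δ * |z.im|) * β ^ 2) :
    ∃ x ∈ Set.Icc (z.re - |z.im| - δ) (z.re + |z.im| + δ), (x : ℂ) ∈ spectrum ℂ A :=
  stmt3_general A hA n e β hβ hβ' A0 A1 A2 hA0 hA1 hA2 B hB z αz hα δ hδ hδ'
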